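/- Every finite linearly ordered poset embeds into Π_n for some n ∈ ℕ. -/

import Mathlib

/-- A finite linearly ordered poset `(A, ⊑, <)`: a finite partial order `le` (⊑)
together with a strict linear order `lt` (<) extending it. -/
structure LOP : Type 1 where
  carrier : Type
  finite : Finite carrier
  le : carrier → carrier → Prop
  lt : carrier → carrier → Prop
  po : IsPartialOrder carrier le
  sto : IsStrictTotalOrder carrier lt
  extend : ∀ a b, le a b → a ≠ b → lt a b

/-- Embeddings of linearly ordered posets: injective maps preserving and reflecting ⊑ and <. -/
def LOP.IsEmb (A B : LOP) (f : A.carrier → B.carrier) : Prop :=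
  Function.Injective f ∧ (∀ a b, A.le a b ↔ B.le (f a) (f b)) ∧
    (∀ a b, A.lt a b ↔ B.lt (f a) (f b))

def LOP.Embeds (A B : LOP) : Prop := ∃ f, A.IsEmb B f

/-- `A` and `B` are isomorphic linearly ordered posets. -/
def LOP.Iso (A B : LOP) : Prop := ∃ f, A.IsEmb B f ∧ Function.Surjective f

/-- `S` is (the underlying set of) a substructure of `C` isomorphic to `A`. -/
def LOP.IsCopy (A C : LOP) (S : Set C.carrier) : Prop :=
  ∃ f, A.IsEmb C f ∧ Set.range f = S

/-- `C ⟶ (B)^A_k`. -/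
def LOP.Arrows (C B A : LOP) (k : ℕ) : Prop :=
  ∀ χ : Set C.carrier → Fin k,
    ∃ Bt : Set C.carrier, B.IsCopy C Bt ∧ ∃ j : Fin k,
      ∀ S : Set C.carrier, A.IsCopy C S → S ⊆ Bt → χ S = j

/-- The Ramsey property for a class of finite linearly ordered posets. -/
def RamseyProp (K : LOP → Prop) : Prop :=
  ∀ A B, K A → K B → A.Embeds B → ∀ k : ℕ, 2 ≤ k →
    ∃ C, K C ∧ C.Arrows B A k

/-- The complemented lexicographic order: `A <c̄lex B` iff `A ⊋ B`, or
`min(A∖B) < min(B∖A)` when `A` and `B` are ⊆-incomparable. -/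
def clexLt (n : ℕ) (A B : Finset (Fin n)) : Prop :=
  B ⊂ A ∨ (¬ A ⊆ B ∧ ¬ B ⊆ A ∧ (A \ B).min < (B \ A).min)

theorem clexLt_iff (n : ℕ) (A B : Finset (Fin n)) :
    clexLt n A B ↔ ∃ p : Fin n, p ∈ A ∧ p ∉ B ∧ ∀ x, x < p → (x ∈ A ↔ x ∈ B) := by
  constructor
  · rintro (h | ⟨h1, h2, h3⟩)
    · have hne : (A \ B).Nonempty := Finset.sdiff_nonempty.2 (fun hs => h.not_subset hs)
      refine ⟨(A \ B).min' hne, ?_, ?_, ?_⟩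
      · exact (Finset.mem_sdiff.1 ((A \ B).min'_mem hne)).1
      · exact (Finset.mem_sdiff.1 ((A \ B).min'_mem hne)).2
      · intro x hx
        constructor
        · intro hxA
          by_contra hxB
          exact absurd (Finset.min'_le _ x (Finset.mem_sdiff.2 ⟨hxA, hxB⟩)) (not_le.2 hx)
        · intro hxB
          exact h.subset hxB
    · have hne : (A \ B).Nonempty := Finset.sdiff_nonempty.2 h1
      refine ⟨(A \ B).min' hne, ?_, ?_, ?_⟩
      · exact (Finset.mem_sdiff.1 ((A \ B).min'_mem hne)).1
      · exact (Finset.mem_sdiff.1 ((A \ B).min'_mem hne)).2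
      · intro x hx
        constructor
        · intro hxA
          by_contra hxB
          exact absurd (Finset.min'_le _ x (Finset.mem_sdiff.2 ⟨hxA, hxB⟩)) (not_le.2 hx)
        · intro hxB
          by_contra hxA
          have hmem : x ∈ B \ A := Finset.mem_sdiff.2 ⟨hxB, hxA⟩
          have h4 : (B \ A).min ≤ (x : WithTop (Fin n)) := Finset.min_le hmem
          have h5 : ((A \ B).min' hne : WithTop (Fin n)) = (A \ B).min := Finset.coe_min' hne
          have h6 : (x : WithTop (Fin n)) < ((A \ B).min' hne : WithTop (Fin n)) :=
            WithTop.coe_lt_coe.2 hx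
          rw [h5] at h6
          exact absurd (h4.trans_lt (h6.trans h3)) (lt_irrefl _)
  · rintro ⟨p, hpA, hpB, hagree⟩
    by_cases hBA : B ⊆ A
    · exact Or.inl (Finset.ssubset_iff_of_subset hBA |>.2 ⟨p, hpA, hpB⟩)
    · refine Or.inr ⟨fun hAB => hpB (hAB hpA), hBA, ?_⟩
      have h1 : (A \ B).min ≤ (p : WithTop (Fin n)) :=
        Finset.min_le (Finset.mem_sdiff.2 ⟨hpA, hpB⟩)
      have hne2 : (B \ A).Nonempty := Finset.sdiff_nonempty.2 hBA
      have hb := Finset.mem_sdiff.1 ((B \ A).min'_mem hne2)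
      have hpb : p < (B \ A).min' hne2 := by
        rcases lt_trichotomy ((B \ A).min' hne2) p with h | h | h
        · exact absurd ((hagree _ h).2 hb.1) hb.2
        · exact absurd (h ▸ hpB) (fun hh => hh hb.1)
        · exact h
      have h2 : (p : WithTop (Fin n)) < (B \ A).min := by
        rw [← Finset.coe_min' hne2]
        exact_mod_cast hpb
      exact h1.trans_lt h2

theorem clexLt_sto (n : ℕ) : IsStrictTotalOrder (Finset (Fin n)) (clexLt n) :=
  { trichotomous := fun A B => by
      refine fun h1' h2' => ((?_ : clexLt n A B ∨ A = B ∨ clexLt n B A).resolve_left h1').resolve_right h2'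
      by_cases hAB : A = B
      · exact Or.inr (Or.inl hAB)
      · have hne : ((A \ B) ∪ (B \ A)).Nonempty := by
          rw [Finset.nonempty_iff_ne_empty]
          intro h
          rcases Finset.union_eq_empty.1 h with ⟨h1, h2⟩
          exact hAB (Finset.Subset.antisymm (Finset.sdiff_eq_empty_iff_subset.1 h1)
            (Finset.sdiff_eq_empty_iff_subset.1 h2))
        set u := ((A \ B) ∪ (B \ A)).min' hne with hu_def
        have hu : u ∈ (A \ B) ∪ (B \ A) := Finset.min'_mem _ hne
        have hagree : ∀ x, x < u → (x ∈ A ↔ x ∈ B) := by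
          intro x hx
          constructor
          · intro hxA
            by_contra hxB
            exact absurd (Finset.min'_le _ x (Finset.mem_union_left _
              (Finset.mem_sdiff.2 ⟨hxA, hxB⟩))) (not_le.2 hx)
          · intro hxB
            by_contra hxA
            exact absurd (Finset.min'_le _ x (Finset.mem_union_right _
              (Finset.mem_sdiff.2 ⟨hxB, hxA⟩))) (not_le.2 hx)
        rcases Finset.mem_union.1 hu with h | h
        · rcases Finset.mem_sdiff.1 h with ⟨h1, h2⟩
          exact Or.inl ((clexLt_iff n A B).2 ⟨u, h1, h2, hagree⟩)
        · rcases Finset.mem_sdiff.1 h with ⟨h1, h2⟩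
          exact Or.inr (Or.inr ((clexLt_iff n B A).2
            ⟨u, h1, h2, fun x hx => (hagree x hx).symm⟩))
    irrefl := fun A h => by
      rcases (clexLt_iff n A A).1 h with ⟨p, h1, h2, _⟩
      exact h2 h1
    trans := fun A B C hAB hBC => by
      rcases (clexLt_iff n A B).1 hAB with ⟨p, hpA, hpB, hp⟩
      rcases (clexLt_iff n B C).1 hBC with ⟨q, hqB, hqC, hq⟩
      rcases lt_trichotomy p q with h | h | h
      · exact (clexLt_iff n A C).2 ⟨p, hpA, fun hpC => hpB ((hq p h).2 hpC),
          fun x hx => (hp x hx).trans (hq x (hx.trans h))⟩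
      · exact absurd (h ▸ hqB) hpB
      · exact (clexLt_iff n A C).2 ⟨q, (hp q h).2 hqB, hqC,
          fun x hx => (hp x (hx.trans h)).trans (hq x hx)⟩ }

/-- The linearly ordered poset `Π_n = (𝒫({1,…,n}), ⊇, <c̄lex)`. -/
def PiN (n : ℕ) : LOP where
  carrier := Finset (Fin n)
  finite := inferInstance
  le := fun A B => B ⊆ A
  lt := clexLt n
  po :=
    { refl := fun A => Finset.Subset.refl A
      trans := fun _ _ _ hAB hBC => hBC.trans hAB
      antisymm := fun _ _ h1 h2 => Finset.Subset.antisymm h2 h1 }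
  sto := clexLt_sto n
  extend := fun _ _ hle hne => Or.inl (hle.ssubset_of_ne (fun h => hne h.symm))

/-- Replace the linear order of a linearly ordered poset by another linear
extension of the same partial order. -/
def LOP.reorder (A : LOP) (l : A.carrier → A.carrier → Prop)
    (h1 : IsStrictTotalOrder A.carrier l)
    (h2 : ∀ a b, A.le a b → a ≠ b → l a b) : LOP :=
  ⟨A.carrier, A.finite, A.le, l, A.po, h1, h2⟩

/-- The ordering property for a class of finite linearly ordered posets: for every
poset underlying a member there is a poset underlying a member such that any
linear extension of the former (lying in the class) embeds into any linear
extension of the latter (lying in the class). -/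
def OrderingProp (K : LOP → Prop) : Prop :=
  ∀ A, K A → ∃ B, K B ∧
    ∀ lA h1A h2A lB h1B h2B,
      K (A.reorder lA h1A h2A) → K (B.reorder lB h1B h2B) →
        (A.reorder lA h1A h2A).Embeds (B.reorder lB h1B h2B)

/-!
Enumerate `A` increasingly along `<` as `e 0 < ⋯ < e (n-1)` and send `a` to the set of
positions of its `⊑`-upper set, `{i | a ⊑ e i}`; upper sets reverse inclusion exactly when
their generators are `⊑`-related. If `a < b`, the two codes agree below the position `p` of
`a`, since nothing `<`-below `a` lies `⊑`-above `a` or `b`; and at `p` the first contains `p`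
while the second does not, so the codes are `<c̄lex`-ordered with first difference `p`.
-/

section UpsetIndices

variable {α : Type*} [LinearOrder α] {n : ℕ} (e : Fin n ≃o α) (r : α → α → Prop) [DecidableRel r]

def upsetIndices (a : α) : Finset (Fin n) :=
  Finset.univ.filter fun i => r a (e i)

variable {e r}

theorem mem_upsetIndices {a : α} {i : Fin n} : i ∈ upsetIndices e r a ↔ r a (e i) := by
  simp [upsetIndices]

theorem upsetIndices_subset_iff [IsPreorder α r] {a b : α} :
    upsetIndices e r b ⊆ upsetIndices e r a ↔ r a b := by
  refine ⟨fun h => ?_, fun hab i hi => ?_⟩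
  · have hb : e.symm b ∈ upsetIndices e r b := by simp [mem_upsetIndices, refl_of r b]
    simpa [mem_upsetIndices] using h hb
  · rw [mem_upsetIndices] at hi ⊢
    exact trans_of r hab hi

theorem clexLt_upsetIndices [Std.Refl r] (hext : ∀ a b, r a b → a ≠ b → a < b) {a b : α}
    (hab : a < b) : clexLt n (upsetIndices e r a) (upsetIndices e r b) := by
  have not_rel_of_lt : ∀ {c y : α}, y < c → ¬ r c y := fun hyc hcy =>
    (hext _ _ hcy hyc.ne').asymm hyc
  refine (clexLt_iff n _ _).2 ⟨e.symm a, ?_, ?_, fun x hx => ?_⟩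
  · simp [mem_upsetIndices, refl_of r a]
  · simpa [mem_upsetIndices] using not_rel_of_lt hab
  · have hxa : e x < a := by simpa using e.strictMono hx
    simp only [mem_upsetIndices, not_rel_of_lt hxa, not_rel_of_lt (hxa.trans hab)]

end UpsetIndices

/-- Every finite linearly ordered poset embeds into `Π_n` for some `n`. -/
theorem stmt_7 : ∀ A : LOP, ∃ n : ℕ, A.Embeds (PiN n) := by
  classical
  intro A
  have := A.finite
  have := A.sto
  have := A.po
  let := Fintype.ofFinite A.carrier
  let := linearOrderOfSTO A.lt
  let e := monoEquivOfFin A.carrier rfl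
  have := clexLt_sto (Fintype.card A.carrier)
  let f := RelEmbedding.ofMonotone (r := A.lt) (upsetIndices e A.le)
    fun _ _ => clexLt_upsetIndices A.extend
  exact ⟨_, f, f.injective, fun _ _ => upsetIndices_subset_iff.symm,
    fun _ _ => f.map_rel_iff.symm⟩
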